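/- If uv and uw are two edges of a Euclidean minimum spanning tree, then the angle ∠vuw is strictly greater than 60 degrees (when pairwise distances are distinct). -/

import Mathlib

open scoped Classical MeasureTheory
noncomputable section

/-- The Euclidean plane. -/
abbrev Pt : Type := EuclideanSpace ℝ (Fin 2)

/-- Perimeter of a plane region: 1-dimensional Hausdorff measure of its frontier. -/
noncomputable def perim (A : Set Pt) : ℝ := (μH[1] (frontier A)).toReal

/-- The Euclidean length of an (unordered) edge on points of `P`. -/
noncomputable def elen {P : Finset Pt} (e : Sym2 ↥P) : ℝ :=
  Sym2.lift ⟨fun (u v : ↥P) => dist (u : Pt) (v : Pt), fun _ _ => dist_comm _ _⟩ e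

/-- Total Euclidean length of the edges of a graph on the points of `P`. -/
noncomputable def glen {P : Finset Pt} (G : SimpleGraph ↥P) : ℝ := ∑ᶠ e ∈ G.edgeSet, elen e

/-- `T` is a Euclidean minimum spanning tree of `P`. -/
def IsEMST (P : Finset Pt) (T : SimpleGraph ↥P) : Prop :=
  T.IsTree ∧ ∀ T' : SimpleGraph ↥P, T'.IsTree → glen T ≤ glen T'

open SimpleGraph

section SwapLemmas

variable {V : Type*} {T : SimpleGraph V} {u v w : V}

/-- In an acyclic graph, two neighbors of a vertex are not adjacent. -/
lemma aux_not_adj (hT : T.IsAcyclic) (hv : T.Adj u v) (hw : T.Adj u w) (hne : v ≠ w) :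
    ¬ T.Adj v w := by
  intro hvw
  have hb : T.IsBridge s(u, v) := (isAcyclic_iff_forall_adj_isBridge.mp hT) hv
  apply hb
  have h1 : (T \ fromEdgeSet {s(u, v)}).Adj u w := by
    rw [sdiff_adj, fromEdgeSet_adj]
    refine ⟨hw, ?_⟩
    rintro ⟨hmem, -⟩
    rw [Set.mem_singleton_iff, Sym2.eq_iff] at hmem
    rcases hmem with ⟨-, h⟩ | ⟨h, -⟩
    · exact hne h.symm
    · exact hv.ne h
  have h2 : (T \ fromEdgeSet {s(u, v)}).Adj w v := by
    rw [sdiff_adj, fromEdgeSet_adj]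
    refine ⟨hvw.symm, ?_⟩
    rintro ⟨hmem, -⟩
    rw [Set.mem_singleton_iff, Sym2.eq_iff] at hmem
    rcases hmem with ⟨h, -⟩ | ⟨-, h⟩
    · exact hw.ne h.symm
    · exact hv.ne h.symm
  exact h1.reachable.trans h2.reachable

/-- Swapping an edge `uv` of a tree for the edge `vw` (where `uw` is also an edge)
produces a tree. -/
lemma aux_swap_isTree (hT : T.IsTree) (hv : T.Adj u v) (hw : T.Adj u w) (hne : v ≠ w) :
    ((T \ fromEdgeSet {s(u, v)}) ⊔ fromEdgeSet {s(v, w)}).IsTree := by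
  set D := T \ fromEdgeSet {s(u, v)} with hDdef
  set T' := D ⊔ fromEdgeSet {s(v, w)} with hT'def
  have hb : T.IsBridge s(u, v) := (isAcyclic_iff_forall_adj_isBridge.mp hT.IsAcyclic) hv
  have hnr : ¬ D.Reachable u v := hb
  have hDuw : D.Adj u w := by
    rw [hDdef, sdiff_adj, fromEdgeSet_adj]
    refine ⟨hw, ?_⟩
    rintro ⟨hmem, -⟩
    rw [Set.mem_singleton_iff, Sym2.eq_iff] at hmem
    rcases hmem with ⟨-, h⟩ | ⟨h, -⟩
    · exact hne h.symm
    · exact hv.ne h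
  have hT'uw : T'.Adj u w := (sup_adj _ _ _ _).mpr (Or.inl hDuw)
  have hT'vw : T'.Adj v w := (sup_adj _ _ _ _).mpr (Or.inr ((fromEdgeSet_adj _).mpr ⟨rfl, hne⟩))
  -- connectivity
  have key : ∀ a b : V, T.Adj a b → T'.Reachable a b := by
    intro a b hab
    by_cases h : s(a, b) = s(u, v)
    · rw [Sym2.eq_iff] at h
      rcases h with ⟨rfl, rfl⟩ | ⟨rfl, rfl⟩
      · exact hT'uw.reachable.trans hT'vw.symm.reachable
      · exact hT'vw.reachable.trans hT'uw.symm.reachable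
    · have hD : D.Adj a b := by
        rw [hDdef, sdiff_adj, fromEdgeSet_adj]
        exact ⟨hab, fun hc => h hc.1⟩
      exact ((sup_adj _ _ _ _).mpr (Or.inl hD)).reachable
  have walkRec : ∀ {a b : V}, T.Walk a b → T'.Reachable a b := by
    intro a b p
    induction p with
    | nil => exact Reachable.refl _
    | cons h _ ih => exact (key _ _ h).trans ih
  have hconn : T'.Connected := by
    rw [connected_iff]
    refine ⟨fun a b => walkRec (hT.isConnected a b).some, hT.isConnected.nonempty⟩
  -- the new edge is a bridge of T'
  have hbr' : T'.IsBridge s(v, w) := by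
    rw [isBridge_iff]
    refine fun hr => ?_
    apply hnr
    have hle : T' \ fromEdgeSet {s(v, w)} ≤ D := by
      intro a b hab
      rw [sdiff_adj, hT'def, sup_adj] at hab
      rcases hab.1 with h | h
      · exact h
      · exact absurd h hab.2
    exact hDuw.reachable.trans (hr.mono hle).symm
  -- acyclicity
  have hacyc : T'.IsAcyclic := by
    intro x c hc
    by_cases hm : s(v, w) ∈ c.edges
    · exact ((isBridge_iff_forall_cycle_notMem hT'vw).mp hbr') c hc hm
    · have hsub : ∀ e ∈ c.edges, e ∈ T.edgeSet := by
        intro e he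
        have h1 : e ∈ T'.edgeSet := c.edges_subset_edgeSet he
        simp only [hT'def, edgeSet_sup, hDdef, edgeSet_sdiff, edgeSet_fromEdgeSet,
          edgeSet_sdiff_sdiff_isDiag, Set.mem_union, Set.mem_diff, Set.mem_singleton_iff,
          Set.mem_setOf_eq] at h1
        rcases h1 with h1 | h1
        · exact h1.1
        · exact absurd (h1.1 ▸ he) hm
      exact hT.IsAcyclic (c.transfer T hsub) (hc.transfer hsub)
  exact ⟨hconn, hacyc⟩

lemma aux_swap_edgeSet (hne : v ≠ w) :
    ((T \ fromEdgeSet {s(u, v)}) ⊔ fromEdgeSet {s(v, w)}).edgeSet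
      = insert s(v, w) (T.edgeSet \ {s(u, v)}) := by
  have h1 : ({s(v, w)} : Set (Sym2 V)) \ {e | e.IsDiag} = {s(v, w)} := by
    ext e
    simp only [Set.mem_diff, Set.mem_singleton_iff, Set.mem_setOf_eq, and_iff_left_iff_imp]
    rintro rfl
    exact fun hd => hne (Sym2.mk_isDiag_iff.mp hd)
  rw [edgeSet_sup, edgeSet_sdiff, edgeSet_fromEdgeSet, edgeSet_sdiff_sdiff_isDiag,
    edgeSet_fromEdgeSet, Sym2.diagSet, h1, Set.union_comm, Set.insert_eq]

end SwapLemmas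

/-- Key lemma: if `uv` and `uw` are edges of an EMST then `|uv| < |vw|`. -/
lemma EMST_dist_lt (P : Finset Pt)
    (hdist : ∀ p ∈ P, ∀ q ∈ P, ∀ r ∈ P, ∀ s ∈ P, p ≠ q → r ≠ s →
      ({p, q} : Finset Pt) ≠ {r, s} → dist p q ≠ dist r s)
    (T : SimpleGraph ↥P) (hT : IsEMST P T)
    (u v w : ↥P) (hv : T.Adj u v) (hw : T.Adj u w) (hne : v ≠ w) :
    dist (u : Pt) (v : Pt) < dist (v : Pt) (w : Pt) := by
  classical
  set T' := (T \ fromEdgeSet {s(u, v)}) ⊔ fromEdgeSet {s(v, w)} with hT'def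
  have htree' : T'.IsTree := aux_swap_isTree hT.1 hv hw hne
  have hle : glen T ≤ glen T' := hT.2 T' htree'
  haveI i1 : Fintype T.edgeSet := Fintype.ofFinite _
  haveI i2 : Fintype T'.edgeSet := Fintype.ofFinite _
  have hg1 : glen T = ∑ e ∈ T.edgeFinset, elen e := by
    rw [glen, ← coe_edgeFinset, finsum_mem_coe_finset]
  have hg2 : glen T' = ∑ e ∈ T'.edgeFinset, elen e := by
    rw [glen, ← coe_edgeFinset, finsum_mem_coe_finset]
  have hvwmem : s(v, w) ∉ T.edgeSet := by
    rw [mem_edgeSet]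
    exact aux_not_adj hT.1.IsAcyclic hv hw hne
  have huvmem : s(u, v) ∈ T.edgeFinset := by
    rw [mem_edgeFinset, mem_edgeSet]; exact hv
  have hEF : T'.edgeFinset = insert s(v, w) (T.edgeFinset.erase s(u, v)) := by
    ext e
    rw [mem_edgeFinset, hT'def, aux_swap_edgeSet hne]
    simp only [Set.mem_insert_iff, Set.mem_diff, Set.mem_singleton_iff, Finset.mem_insert,
      Finset.mem_erase, mem_edgeFinset]
    tauto
  have hnotmem : s(v, w) ∉ T.edgeFinset.erase s(u, v) := by
    intro h
    exact hvwmem (mem_edgeFinset.mp (Finset.mem_of_mem_erase h))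
  have hsum : glen T' = elen (P := P) s(v, w) + (glen T - elen (P := P) s(u, v)) := by
    rw [hg2, hEF, Finset.sum_insert hnotmem, Finset.sum_erase_eq_sub huvmem, hg1]
  have helen1 : elen (P := P) s(u, v) = dist (u : Pt) (v : Pt) := rfl
  have helen2 : elen (P := P) s(v, w) = dist (v : Pt) (w : Pt) := rfl
  have hle2 : dist (u : Pt) (v : Pt) ≤ dist (v : Pt) (w : Pt) := by
    rw [hsum, helen1, helen2] at hle
    linarith
  have hneq : dist (u : Pt) (v : Pt) ≠ dist (v : Pt) (w : Pt) := by
    apply hdist _ u.2 _ v.2 _ v.2 _ w.2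
    · exact fun h => hv.ne (Subtype.coe_injective h)
    · exact fun h => hne (Subtype.coe_injective h)
    · intro h
      have hu : (u : Pt) ∈ ({(v : Pt), (w : Pt)} : Finset Pt) := by
        rw [← h]
        exact Finset.mem_insert_self _ _
      rcases Finset.mem_insert.mp hu with h' | h'
      · exact hv.ne (Subtype.coe_injective h')
      · exact hw.ne (Subtype.coe_injective (Finset.mem_singleton.mp h'))
  exact lt_of_le_of_ne hle2 hneq

/-- If `uv` and `uw` are two edges of a Euclidean minimum spanning tree
(of a point set with distinct pairwise distances), then the angle `∠ v u w` is strictly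
greater than 60 degrees. -/
theorem EMST_angle_gt_sixty
    (P : Finset Pt)
    (hdist : ∀ p ∈ P, ∀ q ∈ P, ∀ r ∈ P, ∀ s ∈ P, p ≠ q → r ≠ s →
      ({p, q} : Finset Pt) ≠ {r, s} → dist p q ≠ dist r s)
    (T : SimpleGraph ↥P) (hT : IsEMST P T)
    (u v w : ↥P) (hv : T.Adj u v) (hw : T.Adj u w) (hne : v ≠ w) :
    Real.pi / 3 < EuclideanGeometry.angle (v : Pt) (u : Pt) (w : Pt) := by
  have h1 : dist (u : Pt) (v : Pt) < dist (v : Pt) (w : Pt) :=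
    EMST_dist_lt P hdist T hT u v w hv hw hne
  have h2 : dist (u : Pt) (w : Pt) < dist (v : Pt) (w : Pt) := by
    have := EMST_dist_lt P hdist T hT u w v hw hv hne.symm
    rwa [dist_comm (w : Pt) (v : Pt)] at this
  have ha : (0 : ℝ) < dist (u : Pt) (v : Pt) :=
    dist_pos.mpr (fun h => hv.ne (Subtype.coe_injective h))
  have hb : (0 : ℝ) < dist (u : Pt) (w : Pt) :=
    dist_pos.mpr (fun h => hw.ne (Subtype.coe_injective h))
  have hlaw := EuclideanGeometry.law_cos (v : Pt) (u : Pt) (w : Pt)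
  rw [dist_comm (v : Pt) (u : Pt), dist_comm (w : Pt) (u : Pt)] at hlaw
  by_contra hcon
  push_neg at hcon
  have hang0 : 0 ≤ EuclideanGeometry.angle (v : Pt) (u : Pt) (w : Pt) :=
    EuclideanGeometry.angle_nonneg _ _ _
  have hpi : Real.pi / 3 ≤ Real.pi := by linarith [Real.pi_pos]
  have hcos : Real.cos (Real.pi / 3) ≤
      Real.cos (EuclideanGeometry.angle (v : Pt) (u : Pt) (w : Pt)) :=
    Real.cos_le_cos_of_nonneg_of_le_pi hang0 hpi hcon
  rw [Real.cos_pi_div_three] at hcos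
  nlinarith [mul_pos ha hb, sq_nonneg (dist (u : Pt) (v : Pt) - dist (u : Pt) (w : Pt))]
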